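/- arXiv:1806.03915 — 2 statements merged into one kernel-verified Lean document; each statement's English description precedes it below -/
import Mathlib

section
/- Let α_{k+1} be the largest root of the quadratic 2Lα² − α − C_k = 0 with L > 0, C_k ≥ 0, and set C_{k+1} = C_k + α_{k+1}, starting from C₀ = 0. Then C_k ≥ (k+1)²/(8L) for all k ≥ 1. -/
/-!
After the rescaling `D k = 8 L C_k` the recursion reads `D (k+1) = D k + 2 (1 + √(1 + D k))`,
free of `L`. Inductively `(k+1)² - 1 ≤ D k`, i.e. `√(1 + D k) ≥ k + 1`, and then one more step gives
`D (k+1) ≥ (k+1)² - 1 + 2 (k + 2) = (k+2)²`.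
-/

section RescaledRecursion

variable {D : ℕ → ℝ} (hD0 : D 0 = 0)
  (hDrec : ∀ k, D (k + 1) = D k + 2 * (1 + Real.sqrt (1 + D k)))
include hDrec

theorem sq_add_two_le_succ_of_sq_sub_one_le {k : ℕ} (hk : ((k : ℝ) + 1) ^ 2 - 1 ≤ D k) :
    ((k : ℝ) + 2) ^ 2 ≤ D (k + 1) := by
  have hsqrt : (k : ℝ) + 1 ≤ Real.sqrt (1 + D k) :=
    Real.le_sqrt_of_sq_le (by linarith)
  rw [hDrec]
  nlinarith

include hD0

theorem sq_sub_one_le_of_rec (k : ℕ) : ((k : ℝ) + 1) ^ 2 - 1 ≤ D k := by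
  induction k with
  | zero => simp [hD0]
  | succ k ih =>
    have := sq_add_two_le_succ_of_sq_sub_one_le hDrec ih
    push_cast
    linarith

theorem sq_le_of_rec {k : ℕ} (hk : 1 ≤ k) : ((k : ℝ) + 1) ^ 2 ≤ D k := by
  obtain ⟨j, rfl⟩ := Nat.exists_eq_add_of_le' hk
  have := sq_add_two_le_succ_of_sq_sub_one_le hDrec (sq_sub_one_le_of_rec hD0 hDrec j)
  push_cast
  linarith

end RescaledRecursion

theorem coeff_growth_lower_bound_general (L : ℝ) (hL : 0 < L) (α C : ℕ → ℝ)
    (hC0 : C 0 = 0)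
    (hα : ∀ k, α (k + 1) = (1 + Real.sqrt (1 + 8 * L * C k)) / (4 * L))
    (hCrec : ∀ k, C (k + 1) = C k + α (k + 1)) :
    ∀ k : ℕ, 1 ≤ k → ((k : ℝ) + 1) ^ 2 / (8 * L) ≤ C k := by
  intro k hk
  have hDrec : ∀ k, 8 * L * C (k + 1) = 8 * L * C k + 2 * (1 + Real.sqrt (1 + 8 * L * C k)) := by
    intro k
    rw [hCrec, hα]
    field_simp
    ring
  rw [div_le_iff₀ (by positivity), mul_comm]
  exact sq_le_of_rec (D := fun k => 8 * L * C k) (by simp [hC0]) hDrec hk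

/-- For the recursion `C₀ = α₀ = 0`, `α_{k+1} = (1 + √(1 + 8 L C_k))/(4L)` (the largest
root of `2Lα² − α − C_k = 0`), `C_{k+1} = C_k + α_{k+1}`, one has
`C_k ≥ (k+1)²/(8L)` for all `k ≥ 1`. -/
theorem coeff_growth_lower_bound (L : ℝ) (hL : 0 < L) (α C : ℕ → ℝ)
    (hC0 : C 0 = 0) (hα0 : α 0 = 0)
    (hα : ∀ k, α (k + 1) = (1 + Real.sqrt (1 + 8 * L * C k)) / (4 * L))
    (hCrec : ∀ k, C (k + 1) = C k + α (k + 1)) :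
    ∀ k : ℕ, 1 ≤ k → ((k : ℝ) + 1) ^ 2 / (8 * L) ≤ C k :=
  coeff_growth_lower_bound_general L hL α C hC0 hα hCrec
end

section
/- Under the recursion C_{k+1} = C_k + α_{k+1} with α_{k+1} the largest root of 2Lα² = C_k + α and C₀ = 0, it holds that C_{k+1} ≤ 4 C_k for all k ≥ 1, i.e. consecutive coefficients grow by at most a factor of 4. -/
/-! `α_{k+1} ≤ 3 C_k` as soon as `x = L C_k ≥ 2/9`: after squaring, `√(1 + 8x) ≤ 12x - 1`
is `32x ≤ 144x²`. Since `C_1 = 1/(2L)` and the coefficients increase, `L C_k ≥ 1/2` for `k ≥ 1`. -/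

open Real

noncomputable def coeffStep (L c : ℝ) : ℝ := c + (1 + √(1 + 8 * L * c)) / (4 * L)

theorem coeffStep_zero (L : ℝ) : coeffStep L 0 = 1 / (2 * L) := by
  rw [coeffStep, mul_zero, add_zero, sqrt_one, zero_add]
  ring

theorem le_coeffStep {L : ℝ} (hL : 0 ≤ L) (c : ℝ) : c ≤ coeffStep L c :=
  le_add_of_nonneg_right (by positivity)

theorem one_add_sqrt_one_add_eight_mul_le {x : ℝ} (hx : 2 / 9 ≤ x) : 1 + √(1 + 8 * x) ≤ 12 * x := by
  have hsqrt : √(1 + 8 * x) ≤ 12 * x - 1 :=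
    sqrt_le_iff.mpr ⟨by linarith, by nlinarith⟩
  linarith

theorem coeffStep_le_four_mul {L c : ℝ} (hL : 0 < L) (hc : 2 / (9 * L) ≤ c) :
    coeffStep L c ≤ 4 * c := by
  have hLc : 2 / 9 ≤ L * c := by
    rw [div_le_iff₀ (by positivity)] at hc
    linarith
  have hα : (1 + √(1 + 8 * L * c)) / (4 * L) ≤ 3 * c := by
    rw [div_le_iff₀ (by positivity), mul_assoc 8]
    linarith [one_add_sqrt_one_add_eight_mul_le hLc]
  rw [coeffStep]
  linarith

theorem coeff_growth_factor_le_four_general (L : ℝ) (hL : 0 < L) (α C : ℕ → ℝ)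
    (hC0 : C 0 = 0)
    (hα : ∀ k, α (k + 1) = (1 + Real.sqrt (1 + 8 * L * C k)) / (4 * L))
    (hCrec : ∀ k, C (k + 1) = C k + α (k + 1)) :
    ∀ k : ℕ, 1 ≤ k → C (k + 1) ≤ 4 * C k := by
  have hstep (k : ℕ) : C (k + 1) = coeffStep L (C k) := by rw [hCrec, hα, coeffStep]
  have hlower : ∀ k, 1 ≤ k → 1 / (2 * L) ≤ C k := by
    refine Nat.le_induction ?_ fun k _ ih => ?_
    · rw [hstep, hC0, coeffStep_zero]
    · exact ih.trans (hstep k ▸ le_coeffStep hL.le (C k))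
  have hthreshold : 2 / (9 * L) ≤ 1 / (2 * L) :=
    (div_le_div_iff₀ (by positivity) (by positivity)).mpr (by linarith)
  intro k hk
  rw [hstep]
  exact coeffStep_le_four_mul hL (hthreshold.trans (hlower k hk))

/-- Under the recursion `C₀ = α₀ = 0`, `α_{k+1} = (1 + √(1 + 8 L C_k))/(4L)`,
`C_{k+1} = C_k + α_{k+1}`, consecutive coefficients grow by at most a factor of `4`:
`C_{k+1} ≤ 4 C_k` for all `k ≥ 1`. -/
theorem coeff_growth_factor_le_four (L : ℝ) (hL : 0 < L) (α C : ℕ → ℝ)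
    (hC0 : C 0 = 0) (hα0 : α 0 = 0)
    (hα : ∀ k, α (k + 1) = (1 + Real.sqrt (1 + 8 * L * C k)) / (4 * L))
    (hCrec : ∀ k, C (k + 1) = C k + α (k + 1)) :
    ∀ k : ℕ, 1 ≤ k → C (k + 1) ≤ 4 * C k :=
  coeff_growth_factor_le_four_general L hL α C hC0 hα hCrec
end
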